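/- arXiv:1511.06809 — 6 statements merged into one kernel-verified Lean document; each statement's English description precedes it below -/
import Mathlib

section
/- Semi-Lipschitz monotonicity of the Hamiltonian in the unknown: for all x, p ∈ ℝ^d, every symmetric d×d real matrix N, and all real numbers r₁ ≤ r₂, one has H(x, r₂, p, N) − H(x, r₁, p, N) ≤ γ̄·M·(r₂ − r₁). -/
open scoped BigOperators
open Set Filter

noncomputable section

/-- Clamp a real number to the interval `[-1, 1]`. -/
def clamp (r : ℝ) : ℝ := max (-1) (min 1 r)

/-- Dot product on `Fin n → ℝ`. -/
def dotp {n : ℕ} (x y : Fin n → ℝ) : ℝ := ∑ i, x i * y i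

/-- The clamped branching nonlinearity `G^a(x,r)`. -/
def Gb {d : ℕ} {A : Type*} (γ : (Fin d → ℝ) → A → ℝ)
    (p : ℕ → (Fin d → ℝ) → A → ℝ) (x : Fin d → ℝ) (a : A) (r : ℝ) : ℝ :=
  γ x a * ((∑' k : ℕ, p k x a * (clamp r) ^ k) - clamp r)

/-- The Hamiltonian
`H(x,r,p,N) = inf_a { b·p + (1/2) tr(σσᵀ N) + G^a(x,r) - c(x,a) r }`. -/
def Ham {d m : ℕ} {A : Type*} (b : (Fin d → ℝ) → A → (Fin d → ℝ))
    (σ : (Fin d → ℝ) → A → (Fin d → Fin m → ℝ))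
    (γ : (Fin d → ℝ) → A → ℝ) (p : ℕ → (Fin d → ℝ) → A → ℝ)
    (c : (Fin d → ℝ) → A → ℝ)
    (x : Fin d → ℝ) (r : ℝ) (q : Fin d → ℝ) (N : Fin d → Fin d → ℝ) : ℝ :=
  ⨅ a : A, (dotp (b x a) q
      + (1 / 2) * (∑ i, ∑ j, (∑ l, σ x a i l * σ x a j l) * N j i)
      + Gb γ p x a r - c x a * r)

/-- A modulus of continuity: nondecreasing, nonnegative, tending to `0` at `0⁺`. -/
def IsModulus (ρ : ℝ → ℝ) : Prop :=
  (∀ s, 0 ≤ ρ s) ∧ Monotone ρ ∧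
    Filter.Tendsto ρ (nhdsWithin 0 (Set.Ioi 0)) (nhds 0)

/-- The continuous linear map `v ↦ dotp w v` on `Fin n → ℝ`. -/
def gradCLM {n : ℕ} (w : Fin n → ℝ) : (Fin n → ℝ) →L[ℝ] ℝ :=
  ∑ i, w i • (ContinuousLinearMap.proj i : (Fin n → ℝ) →L[ℝ] ℝ)

/-- Test function data: a candidate test function together with its time
derivative, spatial gradient and spatial Hessian. -/
structure TestData (d : ℕ) where
  φ : ℝ → (Fin d → ℝ) → ℝ
  φt : ℝ → (Fin d → ℝ) → ℝ
  Dφ : ℝ → (Fin d → ℝ) → (Fin d → ℝ)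
  D2φ : ℝ → (Fin d → ℝ) → (Fin d → Fin d → ℝ)

/-- `ψ` records a function which is `C¹` in time and `C²` in space, together with
its derivatives. -/
def IsC12 {d : ℕ} (ψ : TestData d) : Prop :=
  (∀ s y, HasDerivAt (fun τ => ψ.φ τ y) (ψ.φt s y) s) ∧
  (∀ s y, HasFDerivAt (fun z => ψ.φ s z) (gradCLM (ψ.Dφ s y)) y) ∧
  (∀ s y i, HasFDerivAt (fun z => ψ.Dφ s z i) (gradCLM (fun j => ψ.D2φ s y i j)) y) ∧
  Continuous (fun q : ℝ × (Fin d → ℝ) => ψ.φ q.1 q.2) ∧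
  Continuous (fun q : ℝ × (Fin d → ℝ) => ψ.φt q.1 q.2) ∧
  Continuous (fun q : ℝ × (Fin d → ℝ) => ψ.Dφ q.1 q.2) ∧
  Continuous (fun q : ℝ × (Fin d → ℝ) => ψ.D2φ q.1 q.2)

/-- Viscosity subsolution of `∂ₜ u + F(t, x, u, D_x u, D²_x u) = 0` on `[0,T) × ℝ^d`. -/
def IsViscSubsoln {d : ℕ} (T : ℝ)
    (F : ℝ → (Fin d → ℝ) → ℝ → (Fin d → ℝ) → (Fin d → Fin d → ℝ) → ℝ)
    (u : ℝ → (Fin d → ℝ) → ℝ) : Prop :=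
  ∀ t x, 0 ≤ t → t < T → ∀ ψ : TestData d, IsC12 ψ →
    IsLocalMaxOn (fun q : ℝ × (Fin d → ℝ) => u q.1 q.2 - ψ.φ q.1 q.2)
      (Set.Icc (0 : ℝ) T ×ˢ (Set.univ : Set (Fin d → ℝ))) (t, x) →
    u t x = ψ.φ t x →
    0 ≤ ψ.φt t x + F t x (u t x) (ψ.Dφ t x) (ψ.D2φ t x)

/-- Viscosity supersolution of `∂ₜ u + F(t, x, u, D_x u, D²_x u) = 0` on `[0,T) × ℝ^d`. -/
def IsViscSupersoln {d : ℕ} (T : ℝ)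
    (F : ℝ → (Fin d → ℝ) → ℝ → (Fin d → ℝ) → (Fin d → Fin d → ℝ) → ℝ)
    (u : ℝ → (Fin d → ℝ) → ℝ) : Prop :=
  ∀ t x, 0 ≤ t → t < T → ∀ ψ : TestData d, IsC12 ψ →
    IsLocalMinOn (fun q : ℝ × (Fin d → ℝ) => u q.1 q.2 - ψ.φ q.1 q.2)
      (Set.Icc (0 : ℝ) T ×ˢ (Set.univ : Set (Fin d → ℝ))) (t, x) →
    u t x = ψ.φ t x →
    ψ.φt t x + F t x (u t x) (ψ.Dφ t x) (ψ.D2φ t x) ≤ 0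

end

/-! For each control `a`, the map `r ↦ G^a(x,r) - c(x,a) r` increases by at most `γ̄ M (r₂ - r₁)`
from `r₁` to `r₂`: the term `-c r` is nonincreasing, the clamp is monotone and `1`-Lipschitz,
and since `|t^k - s^k| ≤ k |t - s|` on `[-1, 1]`, the generating function `s ↦ ∑ p_k s^k` grows
by at most the mean `∑ k p_k ≤ M` times the increment. Passing to the infimum over `a` only
needs the integrands at `r₂` to be bounded below, which the boundedness of the coefficients
provides. -/

open Bornology

lemma clamp_mem_Icc (r : ℝ) : clamp r ∈ Icc (-1 : ℝ) 1 :=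
  ⟨le_max_left _ _, max_le (by norm_num) (min_le_left _ _)⟩

lemma clamp_mono : Monotone clamp := fun _ _ h => max_le_max le_rfl (min_le_min le_rfl h)

lemma clamp_sub_clamp_le {r₁ r₂ : ℝ} (h : r₁ ≤ r₂) : clamp r₂ - clamp r₁ ≤ r₂ - r₁ := by
  simp only [clamp, max_def, min_def]
  split_ifs <;> linarith

lemma pow_sub_pow_le_natCast_mul_sub {s t : ℝ} (hs : -1 ≤ s) (hst : s ≤ t) (ht : t ≤ 1) (k : ℕ) :
    t ^ k - s ^ k ≤ k * (t - s) := by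
  have hmax : max |t| |s| ≤ 1 :=
    max_le (abs_le.2 ⟨hs.trans hst, ht⟩) (abs_le.2 ⟨hs, hst.trans ht⟩)
  calc t ^ k - s ^ k ≤ |t ^ k - s ^ k| := le_abs_self _
    _ ≤ |t - s| * k * max |t| |s| ^ (k - 1) := abs_pow_sub_pow_le t s k
    _ ≤ |t - s| * k * 1 := by gcongr; exact pow_le_one₀ (by positivity) hmax
    _ = k * (t - s) := by rw [abs_of_nonneg (sub_nonneg.2 hst)]; ring

lemma ciInf_le_ciInf_add {ι : Type*} [Nonempty ι] {f g : ι → ℝ} {C : ℝ}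
    (hf : BddBelow (range f)) (h : ∀ i, f i ≤ g i + C) : ⨅ i, f i ≤ (⨅ i, g i) + C :=
  sub_le_iff_le_add.1 <| le_ciInf fun i => sub_le_iff_le_add.2 <| (ciInf_le hf i).trans (h i)

lemma bddBelow_range_comp_of_isBounded {ι E : Type*} [PseudoMetricSpace E] [ProperSpace E]
    {g : E → ℝ} (hg : Continuous g) {f : ι → E} (hf : IsBounded (range f)) :
    BddBelow (range (g ∘ f)) :=
  ((hf.isCompact_closure.image hg).bddBelow).mono <| by
    rw [range_comp]; exact image_mono subset_closure

section GeneratingFunction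

variable {p : ℕ → ℝ}

lemma summable_mul_pow (hp0 : ∀ k, 0 ≤ p k) (hp : Summable p) {s : ℝ} (hs : |s| ≤ 1) :
    Summable fun k => p k * s ^ k :=
  hp.of_norm_bounded fun k => by
    rw [Real.norm_eq_abs, abs_mul, abs_of_nonneg (hp0 k), abs_pow]
    exact mul_le_of_le_one_right (hp0 k) (pow_le_one₀ (abs_nonneg _) hs)

lemma neg_tsum_le_tsum_mul_pow (hp0 : ∀ k, 0 ≤ p k) (hp : Summable p) {s : ℝ} (hs : |s| ≤ 1) :
    -∑' k, p k ≤ ∑' k, p k * s ^ k := by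
  rw [← tsum_neg]
  refine hp.neg.tsum_le_tsum (fun k => ?_) (summable_mul_pow hp0 hp hs)
  have : -1 ≤ s ^ k := (abs_le.1 (by rw [abs_pow]; exact pow_le_one₀ (abs_nonneg _) hs)).1
  nlinarith [hp0 k]

lemma tsum_mul_pow_sub_tsum_mul_pow_le (hp0 : ∀ k, 0 ≤ p k) (hp : Summable p) {S : ℝ}
    (hmean : HasSum (fun k : ℕ => (k : ℝ) * p k) S) {s t : ℝ} (hs : -1 ≤ s) (hst : s ≤ t)
    (ht : t ≤ 1) : ∑' k, p k * t ^ k - ∑' k, p k * s ^ k ≤ S * (t - s) := by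
  have hsum : ∀ {u : ℝ}, -1 ≤ u → u ≤ 1 → Summable fun k => p k * u ^ k :=
    fun hu hu' => summable_mul_pow hp0 hp (abs_le.2 ⟨hu, hu'⟩)
  rw [← (hsum (hs.trans hst) ht).tsum_sub (hsum hs (hst.trans ht)), ← hmean.mul_right _ |>.tsum_eq]
  refine ((hsum (hs.trans hst) ht).sub (hsum hs (hst.trans ht))).tsum_le_tsum (fun k => ?_)
    (hmean.mul_right _).summable
  calc p k * t ^ k - p k * s ^ k = p k * (t ^ k - s ^ k) := by ring
    _ ≤ p k * (k * (t - s)) := by gcongr; exacts [hp0 k, pow_sub_pow_le_natCast_mul_sub hs hst ht k]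
    _ = k * p k * (t - s) := by ring

end GeneratingFunction

section Branching

variable {d : ℕ} {A : Type*} {γ : (Fin d → ℝ) → A → ℝ} {p : ℕ → (Fin d → ℝ) → A → ℝ}
  {x : Fin d → ℝ} {a : A} {γbar : ℝ}

lemma Gb_sub_Gb_le {M S r₁ r₂ : ℝ} (hγ : γ x a ∈ Icc 0 γbar) (hp0 : ∀ k, 0 ≤ p k x a)
    (hp : Summable (p · x a)) (hmean : HasSum (fun k : ℕ => (k : ℝ) * p k x a) S)
    (hSM : S ≤ M) (hr : r₁ ≤ r₂) :
    Gb γ p x a r₂ - Gb γ p x a r₁ ≤ γbar * M * (r₂ - r₁) := by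
  have hst : clamp r₁ ≤ clamp r₂ := clamp_mono hr
  have hΦ := tsum_mul_pow_sub_tsum_mul_pow_le hp0 hp hmean (clamp_mem_Icc r₁).1 hst
    (clamp_mem_Icc r₂).2
  have hM : 0 ≤ M := (hmean.nonneg fun k => mul_nonneg k.cast_nonneg (hp0 k)).trans hSM
  calc Gb γ p x a r₂ - Gb γ p x a r₁
      = γ x a * ((∑' k, p k x a * clamp r₂ ^ k - ∑' k, p k x a * clamp r₁ ^ k)
          - (clamp r₂ - clamp r₁)) := by
        simp only [Gb]; ring
    _ ≤ γ x a * (M * (clamp r₂ - clamp r₁)) := by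
        gcongr
        · exact hγ.1
        · nlinarith
    _ ≤ γbar * (M * (r₂ - r₁)) :=
        mul_le_mul hγ.2 (mul_le_mul_of_nonneg_left (clamp_sub_clamp_le hr) hM)
          (mul_nonneg hM (sub_nonneg.2 hst)) (hγ.1.trans hγ.2)
    _ = γbar * M * (r₂ - r₁) := by ring

lemma neg_two_mul_le_Gb (hγ : γ x a ∈ Icc 0 γbar) (hp0 : ∀ k, 0 ≤ p k x a)
    (hp : HasSum (p · x a) 1) (r : ℝ) : -(2 * γbar) ≤ Gb γ p x a r := by
  have hΦ := neg_tsum_le_tsum_mul_pow hp0 hp.summable (abs_le.2 (clamp_mem_Icc r))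
  rw [hp.tsum_eq] at hΦ
  calc -(2 * γbar) ≤ γ x a * -2 := by nlinarith [hγ.1, hγ.2]
    _ ≤ Gb γ p x a r := by
        unfold Gb
        gcongr
        · exact hγ.1
        · linarith [(clamp_mem_Icc r).2]

end Branching

section Hamiltonian

variable {d m : ℕ} {A : Type*} (b : (Fin d → ℝ) → A → (Fin d → ℝ))
  (σ : (Fin d → ℝ) → A → (Fin d → Fin m → ℝ)) (γ : (Fin d → ℝ) → A → ℝ)
  (p : ℕ → (Fin d → ℝ) → A → ℝ) (c : (Fin d → ℝ) → A → ℝ)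
  (x : Fin d → ℝ) (q : Fin d → ℝ) (N : Fin d → Fin d → ℝ)

noncomputable def hamIntegrand (r : ℝ) (a : A) : ℝ :=
  dotp (b x a) q + (1 / 2) * (∑ i, ∑ j, (∑ l, σ x a i l * σ x a j l) * N j i)
    + Gb γ p x a r - c x a * r

lemma Ham_eq_iInf_hamIntegrand (r : ℝ) :
    Ham b σ γ p c x r q N = ⨅ a, hamIntegrand b σ γ p c x q N r a :=
  rfl

variable {b σ γ p c x q N}

lemma hamIntegrand_le_add {a : A} {r₁ r₂ K : ℝ} (hc : 0 ≤ c x a) (hr : r₁ ≤ r₂)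
    (hG : Gb γ p x a r₂ - Gb γ p x a r₁ ≤ K) :
    hamIntegrand b σ γ p c x q N r₂ a ≤ hamIntegrand b σ γ p c x q N r₁ a + K := by
  have : c x a * r₁ ≤ c x a * r₂ := by gcongr
  simp only [hamIntegrand]
  linarith

/-- Away from `Gb`, the integrand is a continuous function of `(b x a, σ x a, c x a)`, which
ranges over a bounded subset of a finite-dimensional space. -/
lemma bddBelow_range_hamIntegrand {r : ℝ} (hb : IsBounded (range (b x)))
    (hσ : IsBounded (range (σ x))) (hc : IsBounded (range (c x)))
    (hG : BddBelow (range fun a => Gb γ p x a r)) :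
    BddBelow (range (hamIntegrand b σ γ p c x q N r)) := by
  let g : (Fin d → ℝ) × (Fin d → Fin m → ℝ) × ℝ → ℝ := fun v =>
    dotp v.1 q + (1 / 2) * (∑ i, ∑ j, (∑ l, v.2.1 i l * v.2.1 j l) * N j i) - v.2.2 * r
  have hg : Continuous g := by simp only [g, dotp]; fun_prop
  have hbσc : IsBounded (range fun a => (b x a, σ x a, c x a)) :=
    (hb.prod (hσ.prod hc)).subset <| range_subset_iff.2 fun a =>
      ⟨mem_range_self a, mem_range_self a, mem_range_self a⟩
  obtain ⟨L, hL⟩ := bddBelow_range_comp_of_isBounded hg hbσc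
  obtain ⟨L', hL'⟩ := hG
  refine ⟨L + L', forall_mem_range.2 fun a => ?_⟩
  have h₁ : L ≤ g (b x a, σ x a, c x a) := hL (mem_range_self a)
  have h₂ : L' ≤ Gb γ p x a r := hL' (mem_range_self a)
  simp only [g] at h₁
  simp only [hamIntegrand]
  linarith

end Hamiltonian

theorem hamiltonian_semi_lipschitz_general
    (d m : ℕ)
    (A : Type) [Nonempty A]
    (γbar M : ℝ)
    (b : (Fin d → ℝ) → A → (Fin d → ℝ))
    (σ : (Fin d → ℝ) → A → (Fin d → Fin m → ℝ))
    (γ : (Fin d → ℝ) → A → ℝ)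
    (p : ℕ → (Fin d → ℝ) → A → ℝ)
    (c : (Fin d → ℝ) → A → ℝ)
    (hb_bdd : ∃ C, ∀ x a, ‖b x a‖ ≤ C)
    (hσ_bdd : ∃ C, ∀ x a, ‖σ x a‖ ≤ C)
    (hγ : ∀ x a, γ x a ∈ Set.Icc (0 : ℝ) γbar)
    (hp01 : ∀ k x a, p k x a ∈ Set.Icc (0 : ℝ) 1)
    (hpsum : ∀ x a, HasSum (fun k => p k x a) 1)
    (hpmean : ∀ x a, ∃ S, S ≤ M ∧ HasSum (fun k : ℕ => (k : ℝ) * p k x a) S)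
    (hc0 : ∀ x a, 0 ≤ c x a) (hc_bdd : ∃ C, ∀ x a, c x a ≤ C)
    (x q : Fin d → ℝ) (N : Fin d → Fin d → ℝ)
    (r₁ r₂ : ℝ) (hr : r₁ ≤ r₂) :
    Ham b σ γ p c x r₂ q N - Ham b σ γ p c x r₁ q N ≤ γbar * M * (r₂ - r₁) := by
  have hp0 : ∀ a k, 0 ≤ p k x a := fun a k => (hp01 k x a).1
  have hbounded {E : Type} [SeminormedAddCommGroup E] {f : (Fin d → ℝ) → A → E}
      (hf : ∃ C, ∀ x a, ‖f x a‖ ≤ C) : IsBounded (range (f x)) :=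
    let ⟨C, hC⟩ := hf
    isBounded_iff_forall_norm_le.2 ⟨C, forall_mem_range.2 (hC x)⟩
  have hc : IsBounded (range (c x)) :=
    hbounded (hc_bdd.imp fun C hC x a => by rw [Real.norm_of_nonneg (hc0 x a)]; exact hC x a)
  have hG : BddBelow (range fun a => Gb γ p x a r₂) :=
    ⟨_, forall_mem_range.2 fun a => neg_two_mul_le_Gb (hγ x a) (hp0 a) (hpsum x a) r₂⟩
  have hstep : ∀ a, hamIntegrand b σ γ p c x q N r₂ a
      ≤ hamIntegrand b σ γ p c x q N r₁ a + γbar * M * (r₂ - r₁) := fun a =>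
    let ⟨_, hSM, hS⟩ := hpmean x a
    hamIntegrand_le_add (hc0 x a) hr
      (Gb_sub_Gb_le (hγ x a) (hp0 a) (hpsum x a).summable hS hSM hr)
  rw [Ham_eq_iInf_hamIntegrand, Ham_eq_iInf_hamIntegrand, sub_le_iff_le_add']
  exact ciInf_le_ciInf_add
    (bddBelow_range_hamIntegrand (hbounded hb_bdd) (hbounded hσ_bdd) hc hG) hstep

/-- Semi-Lipschitz monotonicity of the Hamiltonian in the
unknown: for `r₁ ≤ r₂`, `H(x,r₂,p,N) − H(x,r₁,p,N) ≤ γ̄·M·(r₂ − r₁)`. -/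
theorem hamiltonian_semi_lipschitz
    (d m : ℕ) (hd : 0 < d) (hm : 0 < m)
    (A : Type) [Nonempty A]
    (γbar M : ℝ) (hγbar : 0 < γbar) (hM : 0 < M)
    (b : (Fin d → ℝ) → A → (Fin d → ℝ))
    (σ : (Fin d → ℝ) → A → (Fin d → Fin m → ℝ))
    (γ : (Fin d → ℝ) → A → ℝ)
    (p : ℕ → (Fin d → ℝ) → A → ℝ)
    (c : (Fin d → ℝ) → A → ℝ)
    (hb_bdd : ∃ C, ∀ x a, ‖b x a‖ ≤ C)
    (hσ_bdd : ∃ C, ∀ x a, ‖σ x a‖ ≤ C)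
    (hγ : ∀ x a, γ x a ∈ Set.Icc (0 : ℝ) γbar)
    (hp01 : ∀ k x a, p k x a ∈ Set.Icc (0 : ℝ) 1)
    (hpsum : ∀ x a, HasSum (fun k => p k x a) 1)
    (hpmean : ∀ x a, ∃ S, S ≤ M ∧ HasSum (fun k : ℕ => (k : ℝ) * p k x a) S)
    (hc0 : ∀ x a, 0 ≤ c x a) (hc_bdd : ∃ C, ∀ x a, c x a ≤ C)
    (x q : Fin d → ℝ) (N : Fin d → Fin d → ℝ) (hN : ∀ i j, N i j = N j i)
    (r₁ r₂ : ℝ) (hr : r₁ ≤ r₂) :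
    Ham b σ γ p c x r₂ q N - Ham b σ γ p c x r₁ q N ≤ γbar * M * (r₂ - r₁) :=
  hamiltonian_semi_lipschitz_general d m A γbar M b σ γ p c hb_bdd hσ_bdd hγ hp01 hpsum hpmean hc0
    hc_bdd x q N r₁ r₂ hr
end

section
/- Trace inequality for Ishii matrices: let d, m be positive integers, δ > 0, and let X, Y be symmetric d×d real matrices such that the 2d×2d block matrix with blocks (X, 0; 0, −Y) is ≼ (3/δ)·(I_d, −I_d; −I_d, I_d), i.e. (3/δ)·(I_d, −I_d; −I_d, I_d) − (X, 0; 0, −Y) is positive semidefinite. Then for all real d×m matrices U and V, tr(U Uᵀ X − V Vᵀ Y) ≤ (3/δ)·tr((U − V)(U − V)ᵀ). -/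
open scoped BigOperators

lemma ishii_aux (d m : ℕ) (A : Fin d → Fin d → ℝ) (hA : ∀ i j, A i j = A j i)
    (W : Fin d → Fin m → ℝ) :
    ∑ i, ∑ j, (∑ l, W i l * W j l) * A j i
      = ∑ l, ∑ i, ∑ j, A i j * W i l * W j l := by
  calc ∑ i, ∑ j, (∑ l, W i l * W j l) * A j i
      = ∑ i, ∑ j, ∑ l, A i j * W i l * W j l := by
        refine Finset.sum_congr rfl fun i _ => Finset.sum_congr rfl fun j _ => ?_
        rw [Finset.sum_mul]
        refine Finset.sum_congr rfl fun l _ => ?_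
        rw [hA i j]; ring
    _ = ∑ i, ∑ l, ∑ j, A i j * W i l * W j l :=
        Finset.sum_congr rfl fun i _ => Finset.sum_comm
    _ = ∑ l, ∑ i, ∑ j, A i j * W i l * W j l := Finset.sum_comm

/-- **Trace inequality for Ishii matrices.** Let `X, Y` be
symmetric `d × d` real matrices such that the block matrix `(X, 0; 0, −Y)` is
`≼ (3/δ)·(I, −I; −I, I)` (expressed via the associated quadratic forms). Then
for all real `d × m` matrices `U, V`,
`tr(U Uᵀ X − V Vᵀ Y) ≤ (3/δ)·tr((U − V)(U − V)ᵀ)`. -/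
theorem ishii_trace_inequality
    (d m : ℕ) (hd : 0 < d) (hm : 0 < m) (δ : ℝ) (hδ : 0 < δ)
    (X Y : Fin d → Fin d → ℝ)
    (hX : ∀ i j, X i j = X j i) (hY : ∀ i j, Y i j = Y j i)
    (hXY : ∀ ξ η : Fin d → ℝ,
      (∑ i, ∑ j, X i j * ξ i * ξ j) - (∑ i, ∑ j, Y i j * η i * η j)
        ≤ (3 / δ) * ∑ i, (ξ i - η i) ^ 2)
    (U V : Fin d → Fin m → ℝ) :
    (∑ i, ∑ j, (∑ l, U i l * U j l) * X j i)
        - (∑ i, ∑ j, (∑ l, V i l * V j l) * Y j i)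
      ≤ (3 / δ) * ∑ i, ∑ l, (U i l - V i l) ^ 2 := by
  rw [ishii_aux d m X hX U, ishii_aux d m Y hY V, ← Finset.sum_sub_distrib]
  calc ∑ l, ((∑ i, ∑ j, X i j * U i l * U j l) - ∑ i, ∑ j, Y i j * V i l * V j l)
      ≤ ∑ l, (3 / δ) * ∑ i, (U i l - V i l) ^ 2 :=
        Finset.sum_le_sum fun l _ => hXY (fun i => U i l) (fun i => V i l)
    _ = (3 / δ) * ∑ i, ∑ l, (U i l - V i l) ^ 2 := by
        rw [← Finset.mul_sum, Finset.sum_comm]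
end

section
/- Time-rescaled estimate for the clamped branching nonlinearity: let T > 0 and λ > 0. For all t, s ∈ [0,T], all x, y ∈ ℝ^d, every a ∈ A and every r ∈ ℝ, |e^{λt}·G^a(x, r·e^{−λt}) − e^{λs}·G^a(y, r·e^{−λs})| ≤ 2γ̄·|e^{λt} − e^{λs}| + 2e^{λT}·|γ(x,a) − γ(y,a)| + γ̄·e^{λT}·Σ_{k=0}^∞ |p_k(x,a) − p_k(y,a)| + γ̄·(M + 1)·e^{2λT}·|e^{−λt} − e^{−λs}| (the series Σ_k |p_k(x,a) − p_k(y,a)| converges, being bounded by 2). -/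
open scoped BigOperators

noncomputable section

lemma clamp_abs_le (u : ℝ) : |clamp u| ≤ 1 := by
  rw [abs_le]; unfold clamp
  exact ⟨le_max_left _ _, max_le (by norm_num) (min_le_left _ _)⟩

lemma clamp_lip (u v : ℝ) : |clamp u - clamp v| ≤ |u - v| := by
  unfold clamp
  have h1 : |min 1 u - min 1 v| ≤ max |(1:ℝ) - 1| |u - v| := abs_min_sub_min_le_max _ _ _ _
  have h2 : |max (-1) (min 1 u) - max (-1) (min 1 v)| ≤ max |(-1:ℝ) - (-1)| |min 1 u - min 1 v| :=
    abs_max_sub_max_le_max _ _ _ _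
  simp only [sub_self, abs_zero] at h1 h2
  rw [max_eq_right (abs_nonneg _)] at h1
  exact h2.trans (by simpa using max_le (abs_nonneg _) h1)

lemma clamp_of_one_le {u : ℝ} (h : 1 ≤ u) : clamp u = 1 := by
  unfold clamp; rw [min_eq_left h]; norm_num

lemma clamp_of_le_neg_one {u : ℝ} (h : u ≤ -1) : clamp u = -1 := by
  unfold clamp
  rw [min_eq_right (h.trans (by norm_num)), max_eq_left h]

lemma pow_abs_sub (a b : ℝ) (ha : |a| ≤ 1) (hb : |b| ≤ 1) (n : ℕ) :
    |a ^ n - b ^ n| ≤ n * |a - b| := by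
  induction n with
  | zero => simp
  | succ n ih =>
    have e : a ^ (n+1) - b ^ (n+1) = a * (a ^ n - b ^ n) + b ^ n * (a - b) := by ring
    rw [e]
    calc |a * (a ^ n - b ^ n) + b ^ n * (a - b)|
        ≤ |a| * |a ^ n - b ^ n| + |b| ^ n * |a - b| := by
          rw [← abs_pow]
          exact (abs_add_le _ _).trans (by rw [abs_mul, abs_mul])
      _ ≤ 1 * (n * |a - b|) + 1 * |a - b| :=
          add_le_add (mul_le_mul ha ih (abs_nonneg _) zero_le_one)
            (mul_le_mul_of_nonneg_right (pow_le_one₀ (abs_nonneg _) hb) (abs_nonneg _))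
      _ = (↑(n+1) : ℝ) * |a - b| := by push_cast; ring

lemma clamp_scaled (r c₁ c₂ C : ℝ) (h₁ : 0 < c₁) (h₂ : 0 < c₂)
    (hC₁ : c₁⁻¹ ≤ C) (hC₂ : c₂⁻¹ ≤ C) :
    |clamp (r * c₁) - clamp (r * c₂)| ≤ C * |c₁ - c₂| := by
  rcases le_or_gt |r| C with hr | hr
  · calc |clamp (r * c₁) - clamp (r * c₂)| ≤ |r * c₁ - r * c₂| := clamp_lip _ _
      _ = |r| * |c₁ - c₂| := by rw [← abs_mul]; ring_nf
      _ ≤ C * |c₁ - c₂| := mul_le_mul_of_nonneg_right hr (abs_nonneg _)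
  · have hc1 : 1 ≤ |r| * c₁ := by
      rw [← inv_mul_cancel₀ h₁.ne']
      exact mul_le_mul_of_nonneg_right (hC₁.trans hr.le) h₁.le
    have hc2 : 1 ≤ |r| * c₂ := by
      rw [← inv_mul_cancel₀ h₂.ne']
      exact mul_le_mul_of_nonneg_right (hC₂.trans hr.le) h₂.le
    rcases le_or_gt 0 r with hr0 | hr0
    · rw [abs_of_nonneg hr0] at hc1 hc2
      rw [clamp_of_one_le hc1, clamp_of_one_le hc2, sub_self, abs_zero]
      have : (0:ℝ) ≤ C := le_trans (by positivity) hC₁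
      positivity
    · rw [abs_of_neg hr0] at hc1 hc2
      have e1 : r * c₁ ≤ -1 := by nlinarith
      have e2 : r * c₂ ≤ -1 := by nlinarith
      rw [clamp_of_le_neg_one e1, clamp_of_le_neg_one e2, sub_self, abs_zero]
      have : (0:ℝ) ≤ C := le_trans (by positivity) hC₁
      positivity

lemma abs_tsum_le' {f : ℕ → ℝ} (h : Summable fun k => |f k|) :
    |∑' k, f k| ≤ ∑' k, |f k| := by
  simpa [Real.norm_eq_abs] using
    norm_tsum_le_tsum_norm (f := f) (by simpa [Real.norm_eq_abs] using h)

lemma qpow_summable {q : ℕ → ℝ} (hq : ∀ k, 0 ≤ q k) (hs : Summable q)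
    {c : ℝ} (hc : |c| ≤ 1) : Summable (fun k => q k * c ^ k) := by
  apply Summable.of_abs
  apply Summable.of_nonneg_of_le (fun k => abs_nonneg _) _ hs
  intro k
  rw [abs_mul, abs_pow, abs_of_nonneg (hq k)]
  exact mul_le_of_le_one_right (hq k) (pow_le_one₀ (abs_nonneg _) hc)

lemma qpow_tsum_abs_le {q : ℕ → ℝ} (hq : ∀ k, 0 ≤ q k) (hs : HasSum q 1)
    {c : ℝ} (hc : |c| ≤ 1) : |∑' k, q k * c ^ k| ≤ 1 := by
  have h1 := qpow_summable hq hs.summable hc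
  calc |∑' k, q k * c ^ k| ≤ ∑' k, |q k * c ^ k| := abs_tsum_le' h1.abs
    _ ≤ ∑' k, q k := by
        apply Summable.tsum_le_tsum _ h1.abs hs.summable
        intro k
        rw [abs_mul, abs_pow, abs_of_nonneg (hq k)]
        exact mul_le_of_le_one_right (hq k) (pow_le_one₀ (abs_nonneg _) hc)
    _ = 1 := hs.tsum_eq

/-- Time-rescaled estimate for the clamped branching
nonlinearity: for `t, s ∈ [0,T]`,
`|e^{λt} G^a(x, r e^{−λt}) − e^{λs} G^a(y, r e^{−λs})|
  ≤ 2γ̄|e^{λt} − e^{λs}| + 2e^{λT}|γ(x,a) − γ(y,a)|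
    + γ̄ e^{λT} Σ_k |p_k(x,a) − p_k(y,a)| + γ̄(M+1) e^{2λT}|e^{−λt} − e^{−λs}|`. -/
theorem branching_nonlinearity_time_rescaled_estimate
    (d : ℕ) (hd : 0 < d) (A : Type) [Nonempty A]
    (γbar M : ℝ) (hγbar : 0 < γbar) (hM : 0 < M)
    (γ : (Fin d → ℝ) → A → ℝ)
    (p : ℕ → (Fin d → ℝ) → A → ℝ)
    (hγ : ∀ x a, γ x a ∈ Set.Icc (0 : ℝ) γbar)
    (hp01 : ∀ k x a, p k x a ∈ Set.Icc (0 : ℝ) 1)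
    (hpsum : ∀ x a, HasSum (fun k => p k x a) 1)
    (hpmean : ∀ x a, ∃ S, S ≤ M ∧ HasSum (fun k : ℕ => (k : ℝ) * p k x a) S)
    (T : ℝ) (hT : 0 < T) (lam : ℝ) (hlam : 0 < lam)
    (t : ℝ) (ht : t ∈ Set.Icc (0 : ℝ) T) (s : ℝ) (hs : s ∈ Set.Icc (0 : ℝ) T)
    (x y : Fin d → ℝ) (a : A) (r : ℝ) :
    |Real.exp (lam * t) * Gb γ p x a (r * Real.exp (-lam * t))
        - Real.exp (lam * s) * Gb γ p y a (r * Real.exp (-lam * s))|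
      ≤ 2 * γbar * |Real.exp (lam * t) - Real.exp (lam * s)|
        + 2 * Real.exp (lam * T) * |γ x a - γ y a|
        + γbar * Real.exp (lam * T) * (∑' k : ℕ, |p k x a - p k y a|)
        + γbar * (M + 1) * Real.exp (2 * lam * T)
            * |Real.exp (-lam * t) - Real.exp (-lam * s)| := by
  set Et := Real.exp (lam * t) with hEt
  set Es := Real.exp (lam * s) with hEs
  set et := Real.exp (-lam * t) with het
  set es := Real.exp (-lam * s) with hes
  set ET := Real.exp (lam * T) with hET
  set χt := clamp (r * et) with hχt
  set χs := clamp (r * es) with hχs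
  have hγx := hγ x a
  have hγy := hγ y a
  have hχt1 : |χt| ≤ 1 := clamp_abs_le _
  have hχs1 : |χs| ≤ 1 := clamp_abs_le _
  -- exp comparisons
  have hEtT : Et ≤ ET := Real.exp_le_exp.mpr (by nlinarith [ht.2])
  have hEsT : Es ≤ ET := Real.exp_le_exp.mpr (by nlinarith [hs.2])
  have hETpos : (0:ℝ) < ET := Real.exp_pos _
  have hEspos : (0:ℝ) < Es := Real.exp_pos _
  have hetpos : (0:ℝ) < et := Real.exp_pos _
  have hespos : (0:ℝ) < es := Real.exp_pos _
  have hinv_t : et⁻¹ ≤ ET := by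
    rw [het, neg_mul, Real.exp_neg, inv_inv]; exact hEtT
  have hinv_s : es⁻¹ ≤ ET := by
    rw [hes, neg_mul, Real.exp_neg, inv_inv]; exact hEsT
  -- clamp difference
  have hχdiff : |χt - χs| ≤ ET * |et - es| :=
    clamp_scaled r et es ET hetpos hespos hinv_t hinv_s
  -- summabilities
  have hpx : Summable (fun k => p k x a) := (hpsum x a).summable
  have hpy : Summable (fun k => p k y a) := (hpsum y a).summable
  have hpx0 : ∀ k, 0 ≤ p k x a := fun k => (hp01 k x a).1
  have hpy0 : ∀ k, 0 ≤ p k y a := fun k => (hp01 k y a).1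
  have hSxt : Summable (fun k => p k x a * χt ^ k) := qpow_summable hpx0 hpx hχt1
  have hSyt : Summable (fun k => p k y a * χt ^ k) := qpow_summable hpy0 hpy hχt1
  have hSys : Summable (fun k => p k y a * χs ^ k) := qpow_summable hpy0 hpy hχs1
  set Sxt := ∑' k, p k x a * χt ^ k with hSxtd
  set Syt := ∑' k, p k y a * χt ^ k with hSytd
  set Sys := ∑' k, p k y a * χs ^ k with hSysd
  have hSxt1 : |Sxt| ≤ 1 := qpow_tsum_abs_le hpx0 (hpsum x a) hχt1
  have hSyt1 : |Syt| ≤ 1 := qpow_tsum_abs_le hpy0 (hpsum y a) hχt1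
  have hSys1 : |Sys| ≤ 1 := qpow_tsum_abs_le hpy0 (hpsum y a) hχs1
  set gX := γ x a with hgX
  set gY := γ y a with hgY
  -- bound on the p-difference sum
  have hDsumm : Summable (fun k => |p k x a - p k y a|) := by
    apply Summable.of_nonneg_of_le (fun k => abs_nonneg _) _ (hpx.add hpy)
    intro k
    calc |p k x a - p k y a| ≤ |p k x a| + |p k y a| := abs_sub _ _
      _ = p k x a + p k y a := by
          rw [abs_of_nonneg (hpx0 k), abs_of_nonneg (hpy0 k)]
  -- (3): p-difference term
  have h3 : |Sxt - Syt| ≤ ∑' k, |p k x a - p k y a| := by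
    rw [hSxtd, hSytd, ← Summable.tsum_sub hSxt hSyt]
    have heq : (fun k => p k x a * χt ^ k - p k y a * χt ^ k)
        = fun k => (p k x a - p k y a) * χt ^ k := by funext k; ring
    rw [heq]
    have hsum : Summable fun k => |(p k x a - p k y a) * χt ^ k| := by
      apply Summable.of_nonneg_of_le (fun k => abs_nonneg _) _ hDsumm
      intro k
      rw [abs_mul, abs_pow]
      exact mul_le_of_le_one_right (abs_nonneg _) (pow_le_one₀ (abs_nonneg _) hχt1)
    refine (abs_tsum_le' hsum).trans (Summable.tsum_le_tsum ?_ hsum hDsumm)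
    intro k
    rw [abs_mul, abs_pow]
    exact mul_le_of_le_one_right (abs_nonneg _) (pow_le_one₀ (abs_nonneg _) hχt1)
  -- (4): time-shift term
  obtain ⟨S, hSM, hShas⟩ := hpmean y a
  have hSnn : 0 ≤ S := hShas.tsum_eq ▸ (tsum_nonneg (fun k => mul_nonneg (Nat.cast_nonneg k) (hpy0 k)))
  have h4 : |Syt - Sys| ≤ M * |χt - χs| := by
    rw [hSytd, hSysd, ← Summable.tsum_sub hSyt hSys]
    have heq : (fun k => p k y a * χt ^ k - p k y a * χs ^ k)
        = fun k => p k y a * (χt ^ k - χs ^ k) := by funext k; ring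
    rw [heq]
    have hgs : Summable (fun k : ℕ => (k : ℝ) * p k y a * |χt - χs|) :=
      hShas.summable.mul_right _
    have hle : ∀ k : ℕ, |p k y a * (χt ^ k - χs ^ k)| ≤ (k : ℝ) * p k y a * |χt - χs| := by
      intro k
      rw [abs_mul, abs_of_nonneg (hpy0 k)]
      calc p k y a * |χt ^ k - χs ^ k| ≤ p k y a * ((k : ℝ) * |χt - χs|) :=
            mul_le_mul_of_nonneg_left (pow_abs_sub _ _ hχt1 hχs1 k) (hpy0 k)
        _ = (k : ℝ) * p k y a * |χt - χs| := by ring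
    have hsum : Summable fun k => |p k y a * (χt ^ k - χs ^ k)| :=
      Summable.of_nonneg_of_le (fun k => abs_nonneg _) hle hgs
    calc |∑' (k : ℕ), p k y a * (χt ^ k - χs ^ k)|
        ≤ ∑' (k : ℕ), |p k y a * (χt ^ k - χs ^ k)| := abs_tsum_le' hsum
      _ ≤ ∑' (k : ℕ), (k : ℝ) * p k y a * |χt - χs| := Summable.tsum_le_tsum hle hsum hgs
      _ = S * |χt - χs| := (hShas.mul_right _).tsum_eq
      _ ≤ M * |χt - χs| := mul_le_mul_of_nonneg_right hSM (abs_nonneg _)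
  -- decomposition
  have hGx : Gb γ p x a (r * et) = gX * (Sxt - χt) := rfl
  have hGy : Gb γ p y a (r * es) = gY * (Sys - χs) := rfl
  rw [hGx, hGy]
  have hdecomp : Et * (gX * (Sxt - χt)) - Es * (gY * (Sys - χs))
      = (Et - Es) * (gX * (Sxt - χt))
        + Es * ((gX - gY) * (Sxt - χt))
        + Es * (gY * (Sxt - Syt))
        + Es * (gY * ((Syt - χt) - (Sys - χs))) := by ring
  rw [hdecomp]
  have habs : ∀ u v w z : ℝ, |u + v + w + z| ≤ |u| + |v| + |w| + |z| := by
    intro u v w z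
    calc |u + v + w + z| ≤ |u + v + w| + |z| := abs_add_le _ _
      _ ≤ (|u + v| + |w|) + |z| := by gcongr; exact abs_add_le _ _
      _ ≤ ((|u| + |v|) + |w|) + |z| := by gcongr; exact abs_add_le _ _
  refine (habs _ _ _ _).trans ?_
  have b1 : |(Et - Es) * (gX * (Sxt - χt))| ≤ 2 * γbar * |Et - Es| := by
    rw [abs_mul, abs_mul]
    have : |Sxt - χt| ≤ 2 := (abs_sub _ _).trans (by linarith)
    have hgXb : |gX| ≤ γbar := abs_le.mpr ⟨by linarith [hγx.1], hγx.2⟩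
    calc |Et - Es| * (|gX| * |Sxt - χt|) ≤ |Et - Es| * (γbar * 2) := by
          gcongr
      _ = 2 * γbar * |Et - Es| := by ring
  have b2 : |Es * ((gX - gY) * (Sxt - χt))| ≤ 2 * ET * |gX - gY| := by
    rw [abs_mul, abs_mul, abs_of_pos hEspos]
    have h2 : |Sxt - χt| ≤ 2 := (abs_sub _ _).trans (by linarith)
    calc Es * (|gX - gY| * |Sxt - χt|) ≤ ET * (|gX - gY| * 2) := by gcongr
      _ = 2 * ET * |gX - gY| := by ring
  have b3 : |Es * (gY * (Sxt - Syt))| ≤ γbar * ET * (∑' k, |p k x a - p k y a|) := by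
    rw [abs_mul, abs_mul, abs_of_pos hEspos, abs_of_nonneg hγy.1]
    calc Es * (gY * |Sxt - Syt|) ≤ ET * (γbar * (∑' k, |p k x a - p k y a|)) := by
          gcongr
          · exact mul_nonneg hγy.1 (abs_nonneg _)
          · exact hγy.2
      _ = γbar * ET * (∑' k, |p k x a - p k y a|) := by ring
  have b4 : |Es * (gY * ((Syt - χt) - (Sys - χs)))|
      ≤ γbar * (M + 1) * Real.exp (2 * lam * T) * |et - es| := by
    rw [abs_mul, abs_mul, abs_of_pos hEspos, abs_of_nonneg hγy.1]
    have hin : |(Syt - χt) - (Sys - χs)| ≤ (M + 1) * (ET * |et - es|) := by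
      have : (Syt - χt) - (Sys - χs) = (Syt - Sys) - (χt - χs) := by ring
      rw [this]
      calc |(Syt - Sys) - (χt - χs)| ≤ |Syt - Sys| + |χt - χs| := abs_sub _ _
        _ ≤ M * |χt - χs| + |χt - χs| := by gcongr
        _ = (M + 1) * |χt - χs| := by ring
        _ ≤ (M + 1) * (ET * |et - es|) := by
            apply mul_le_mul_of_nonneg_left hχdiff; linarith
    have hexp2 : Real.exp (2 * lam * T) = ET * ET := by
      rw [hET, ← Real.exp_add]; ring_nf
    calc Es * (gY * |(Syt - χt) - (Sys - χs)|)
        ≤ ET * (γbar * ((M + 1) * (ET * |et - es|))) := by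
          gcongr
          · exact mul_nonneg hγy.1 (abs_nonneg _)
          · exact hγy.2
      _ = γbar * (M + 1) * Real.exp (2 * lam * T) * |et - es| := by
          rw [hexp2]; ring
  linarith [b1, b2, b3, b4]

end
end

section
/- Lower bound on the overlap of corresponding branching intervals: let γ̄ > 0, g₁, g₂ ∈ [0, γ̄], and let q = (q_k)_{k∈ℕ} and q̃ = (q̃_k)_{k∈ℕ} be sequences of nonnegative reals with Σ_{k=0}^∞ q_k ≤ 1 and Σ_{k=0}^∞ q̃_k ≤ 1. Then for every k ∈ ℕ, the Lebesgue measure of the intersection satisfies |I_k(g₁, q) ∩ I_k(g₂, q̃)| ≥ g₁·q_k − 2·|g₁ − g₂| − 2γ̄·Σ_{l=0}^{k} |q_l − q̃_l|. -/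
open scoped BigOperators

noncomputable section

/-- The branching interval
`I_k(g₁, q) = [ g₁·Σ_{l<k} q_l , g₁·Σ_{l<k+1} q_l )`. -/
def brInt (g₁ : ℝ) (q : ℕ → ℝ) (k : ℕ) : Set ℝ :=
  Set.Ico (g₁ * ∑ l ∈ Finset.range k, q l) (g₁ * ∑ l ∈ Finset.range (k + 1), q l)

/-- Lower bound on the overlap of corresponding branching
intervals: `|I_k(g₁,q) ∩ I_k(g₂,q̃)| ≥ g₁·q_k − 2|g₁ − g₂| − 2γ̄·Σ_{l≤k} |q_l − q̃_l|`. -/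
theorem branching_intervals_overlap_lower_bound
    (γbar : ℝ) (hγbar : 0 < γbar)
    (g₁ : ℝ) (hg₁ : g₁ ∈ Set.Icc (0 : ℝ) γbar)
    (g₂ : ℝ) (hg₂ : g₂ ∈ Set.Icc (0 : ℝ) γbar)
    (q : ℕ → ℝ) (hq : ∀ k, 0 ≤ q k)
    (hqsum : Summable q) (hqle : (∑' k, q k) ≤ 1)
    (qt : ℕ → ℝ) (hqt : ∀ k, 0 ≤ qt k)
    (hqtsum : Summable qt) (hqtle : (∑' k, qt k) ≤ 1)
    (k : ℕ) :
    g₁ * q k - 2 * |g₁ - g₂| - 2 * γbar * ∑ l ∈ Finset.range (k + 1), |q l - qt l|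
      ≤ (MeasureTheory.volume (brInt g₁ q k ∩ brInt g₂ qt k)).toReal := by
  obtain ⟨hg₁0, hg₁γ⟩ := hg₁
  obtain ⟨hg₂0, hg₂γ⟩ := hg₂
  set a1 := g₁ * ∑ l ∈ Finset.range k, q l with ha1
  set b1 := g₁ * ∑ l ∈ Finset.range (k + 1), q l with hb1
  set a2 := g₂ * ∑ l ∈ Finset.range k, qt l with ha2
  set b2 := g₂ * ∑ l ∈ Finset.range (k + 1), qt l with hb2
  have hvol : (MeasureTheory.volume (brInt g₁ q k ∩ brInt g₂ qt k)).toReal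
      = max (min b1 b2 - max a1 a2) 0 := by
    rw [brInt, brInt, Set.Ico_inter_Ico, Real.volume_Ico, ENNReal.toReal_ofReal']
  rw [hvol]
  refine le_trans ?_ (le_max_left _ _)
  -- partial sums bounds
  have hpart : ∀ (f : ℕ → ℝ), (∀ l, 0 ≤ f l) → Summable f → (∑' l, f l) ≤ 1 →
      ∀ n, ∑ l ∈ Finset.range n, f l ≤ 1 := by
    intro f hf hs hle n
    exact le_trans (Summable.sum_le_tsum (Finset.range n) (fun i _ => hf i) hs) hle
  have hqt1 : ∀ n, ∑ l ∈ Finset.range n, qt l ≤ 1 := hpart qt hqt hqtsum hqtle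
  have hqtnn : ∀ n, 0 ≤ ∑ l ∈ Finset.range n, qt l :=
    fun n => Finset.sum_nonneg fun i _ => hqt i
  have key : ∀ n, |g₁ * ∑ l ∈ Finset.range n, q l - g₂ * ∑ l ∈ Finset.range n, qt l|
      ≤ |g₁ - g₂| + γbar * ∑ l ∈ Finset.range n, |q l - qt l| := by
    intro n
    have h1 : g₁ * ∑ l ∈ Finset.range n, q l - g₂ * ∑ l ∈ Finset.range n, qt l
        = (g₁ - g₂) * (∑ l ∈ Finset.range n, qt l)
          + g₁ * (∑ l ∈ Finset.range n, q l - ∑ l ∈ Finset.range n, qt l) := by ring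
    rw [h1]
    refine le_trans (abs_add_le _ _) (add_le_add ?_ ?_)
    · rw [abs_mul]
      calc |g₁ - g₂| * |∑ l ∈ Finset.range n, qt l|
          ≤ |g₁ - g₂| * 1 := by
            apply mul_le_mul_of_nonneg_left _ (abs_nonneg _)
            rw [abs_of_nonneg (hqtnn n)]; exact hqt1 n
        _ = |g₁ - g₂| := mul_one _
    · rw [abs_mul, ← Finset.sum_sub_distrib]
      refine mul_le_mul ?_ (Finset.abs_sum_le_sum_abs _ _) (abs_nonneg _) hγbar.le
      rw [abs_of_nonneg hg₁0]; exact hg₁γ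
  have hka : |a1 - a2| ≤ |g₁ - g₂| + γbar * ∑ l ∈ Finset.range k, |q l - qt l| := key k
  have hkb : |b1 - b2| ≤ |g₁ - g₂| + γbar * ∑ l ∈ Finset.range (k + 1), |q l - qt l| :=
    key (k + 1)
  have hmin : b1 - |b1 - b2| ≤ min b1 b2 := by
    rcases le_total b1 b2 with h | h
    · simp [min_eq_left h, abs_nonneg]
    · rw [min_eq_right h, abs_of_nonneg (by linarith)]; linarith
  have hmax : max a1 a2 ≤ a1 + |a1 - a2| := by
    rcases le_total a1 a2 with h | h
    · rw [max_eq_right h, abs_of_nonpos (by linarith)]; linarith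
    · rw [max_eq_left h]; have := abs_nonneg (a1 - a2); linarith
  have hba : b1 - a1 = g₁ * q k := by
    rw [hb1, ha1, Finset.sum_range_succ]; ring
  have hmono : ∑ l ∈ Finset.range k, |q l - qt l| ≤ ∑ l ∈ Finset.range (k+1), |q l - qt l| := by
    rw [Finset.sum_range_succ]
    have := abs_nonneg (q k - qt k); linarith
  have hγmono : γbar * ∑ l ∈ Finset.range k, |q l - qt l|
      ≤ γbar * ∑ l ∈ Finset.range (k+1), |q l - qt l| :=
    mul_le_mul_of_nonneg_left hmono hγbar.le
  linarith

end
end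

section
/- Quantitative lower bound on the common refinement of two branching interval systems: let γ̄ > 0, M > 0, g₁, g₂ ∈ [0, γ̄], and let q = (q_k)_{k∈ℕ} and q̃ = (q̃_k)_{k∈ℕ} be sequences of nonnegative reals with Σ_{k=0}^∞ q_k = 1, Σ_{k=0}^∞ q̃_k = 1 and Σ_{k=0}^∞ k·q_k ≤ M. Define I := ([g₁, γ̄] ∩ [g₂, γ̄]) ∪ ⋃_{k∈ℕ} (I_k(g₁, q) ∩ I_k(g₂, q̃)). Then for every integer K ≥ 1, the Lebesgue measure of I satisfies |I| ≥ γ̄ − γ̄·M/K − (2K + 1)·|g₁ − g₂| − 2γ̄·Σ_{k=0}^{K−1} (K − k)·|q_k − q̃_k|. -/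
/-! The common part `[max g₁ g₂, γ̄]` has length at least `γ̄ - g₁ - |g₁ - g₂|`, and the pieces
`I_k(g₁, q) ∩ I_k(g₂, q̃)` are disjoint subsets of `[0, g₁)`. The endpoints of `I_k(g₁, q)` and
`I_k(g₂, q̃)` differ by at most `|g₁ - g₂| + γ̄ Σ_{l ≤ k} |q_l - q̃_l|`, so the `k`-th piece has
length at least `g₁ q_k - 2 (|g₁ - g₂| + γ̄ Σ_{l ≤ k} |q_l - q̃_l|)`. Summing over `k < K` loses
only the tail `g₁ Σ_{k ≥ K} q_k`, which is at most `γ̄ M / K` by Markov's inequality. -/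

open scoped BigOperators

noncomputable section

open Finset MeasureTheory Function

theorem Finset.sum_range_sum_range_succ {R : Type*} [Ring R] (δ : ℕ → R) (n : ℕ) :
    ∑ m ∈ range n, ∑ k ∈ range (m + 1), δ k = ∑ m ∈ range n, ((n : R) - m) * δ m := by
  rw [sum_range_diag_flip n fun k _ => δ k]
  refine sum_congr rfl fun m hm => ?_
  rw [sum_const, card_range, nsmul_eq_mul, Nat.cast_sub (mem_range.1 hm).le]

theorem sub_sum_range_le_div {q : ℕ → ℝ} {a S : ℝ} (hq : ∀ k, 0 ≤ q k)
    (ha : HasSum q a) (hS : HasSum (fun k : ℕ => (k : ℝ) * q k) S) {K : ℕ} (hK : 0 < K) :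
    a - ∑ k ∈ range K, q k ≤ S / K := by
  have hhead : HasSum (fun k => if k < K then q k else 0) (∑ k ∈ range K, q k) := by
    rw [← sum_ite_of_true fun k hk => mem_range.1 hk]
    exact hasSum_sum_of_ne_finset_zero fun k hk => if_neg (by simpa using hk)
  rw [le_div_iff₀ (Nat.cast_pos.2 hK), mul_comm]
  refine hasSum_le (fun k => ?_) ((ha.sub hhead).mul_left (K : ℝ)) hS
  split_ifs with hk
  · simpa using mul_nonneg (Nat.cast_nonneg k) (hq k)
  · simpa using mul_le_mul_of_nonneg_right (Nat.cast_le.2 (not_lt.1 hk)) (hq k)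

theorem MeasureTheory.measure_toReal_add_sum_le_measure_toReal_union_iUnion {α ι : Type*}
    [MeasurableSpace α] {μ : Measure α} {A : Set α} {P : ι → Set α}
    (hfin : μ (A ∪ ⋃ i, P i) ≠ ⊤) (hP : ∀ i, MeasurableSet (P i))
    (hdisj : Pairwise (Disjoint on P)) (hAP : ∀ i, Disjoint A (P i)) (s : Finset ι) :
    (μ A).toReal + ∑ i ∈ s, (μ (P i)).toReal ≤ (μ (A ∪ ⋃ i, P i)).toReal := by
  have hAfin : μ A ≠ ⊤ := ne_top_of_le_ne_top hfin (measure_mono Set.subset_union_left)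
  have hPfin : ∀ i, μ (P i) ≠ ⊤ := fun i =>
    ne_top_of_le_ne_top hfin (measure_mono ((Set.subset_iUnion P i).trans Set.subset_union_right))
  have hsub : A ∪ ⋃ i ∈ s, P i ⊆ A ∪ ⋃ i, P i :=
    Set.union_subset_union_right A (Set.iUnion₂_subset fun i _ => Set.subset_iUnion P i)
  calc (μ A).toReal + ∑ i ∈ s, (μ (P i)).toReal
      = (μ (A ∪ ⋃ i ∈ s, P i)).toReal := by
        rw [measure_union (Set.disjoint_iUnion₂_right.2 fun i _ => hAP i)
            (s.measurableSet_biUnion fun i _ => hP i),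
          measure_biUnion_finset (hdisj.set_pairwise _) fun i _ => hP i,
          ENNReal.toReal_add hAfin (ENNReal.sum_ne_top.2 fun i _ => hPfin i),
          ENNReal.toReal_sum fun i _ => hPfin i]
    _ ≤ (μ (A ∪ ⋃ i, P i)).toReal := ENNReal.toReal_mono hfin (measure_mono hsub)

theorem Real.le_volume_Ico_inter_Ico_toReal (a b c d : ℝ) :
    b - a - |a - c| - |b - d| ≤ (volume (Set.Ico a b ∩ Set.Ico c d)).toReal := by
  rw [Set.Ico_inter_Ico, Real.volume_Ico, ENNReal.toReal_ofReal']
  have hleft : max a c ≤ a + |a - c| :=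
    max_le (by linarith [abs_nonneg (a - c)]) (by linarith [neg_abs_le (a - c)])
  have hright : b - |b - d| ≤ min b d :=
    le_min (by linarith [abs_nonneg (b - d)]) (by linarith [le_abs_self (b - d)])
  exact le_max_of_le_left (by linarith)

theorem Real.volume_Icc_inter_Icc (a b c d : ℝ) :
    volume (Set.Icc a b ∩ Set.Icc c d) = volume (Set.Ico a b ∩ Set.Ico c d) := by
  rw [Set.Icc_inter_Icc, Set.Ico_inter_Ico, Real.volume_Icc, Real.volume_Ico]

theorem abs_mul_sub_mul_le {g₁ g₂ γ x y : ℝ} (hx₀ : 0 ≤ x) (hx₁ : x ≤ 1) (hg₂ : |g₂| ≤ γ) :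
    |g₁ * x - g₂ * y| ≤ |g₁ - g₂| + γ * |x - y| :=
  calc |g₁ * x - g₂ * y| = |(g₁ - g₂) * x + g₂ * (x - y)| := by ring_nf
    _ ≤ |g₁ - g₂| * |x| + |g₂| * |x - y| := by
        rw [← abs_mul, ← abs_mul]; exact abs_add_le _ _
    _ ≤ |g₁ - g₂| * 1 + γ * |x - y| := by
        gcongr
        rwa [abs_of_nonneg hx₀]
    _ = |g₁ - g₂| + γ * |x - y| := by rw [mul_one]

section BranchingIntervals

variable {g g₁ g₂ γ : ℝ} {q qt : ℕ → ℝ}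

theorem brInt_subset_Ico (hg : 0 ≤ g) (hq : ∀ k, 0 ≤ q k)
    (hq₁ : ∀ n, ∑ l ∈ range n, q l ≤ 1) (k : ℕ) : brInt g q k ⊆ Set.Ico 0 g :=
  Set.Ico_subset_Ico (mul_nonneg hg (sum_nonneg fun l _ => hq l))
    (mul_le_of_le_one_right hg (hq₁ (k + 1)))

theorem pairwise_disjoint_brInt (hg : 0 ≤ g) (hq : ∀ k, 0 ≤ q k) :
    Pairwise (Disjoint on brInt g q) := by
  have hmono : Monotone fun n => ∑ l ∈ range n, q l :=
    monotone_nat_of_le_succ fun n => by rw [sum_range_succ]; linarith [hq n]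
  exact (hmono.const_mul hg).pairwise_disjoint_on_Ico_succ

theorem le_volume_brInt_inter_brInt_toReal (hq : ∀ k, 0 ≤ q k)
    (hq₁ : ∀ n, ∑ l ∈ range n, q l ≤ 1) (hg₂ : |g₂| ≤ γ) (k : ℕ) :
    g₁ * q k - 2 * |g₁ - g₂| - 2 * γ * ∑ l ∈ range (k + 1), |q l - qt l|
      ≤ (volume (brInt g₁ q k ∩ brInt g₂ qt k)).toReal := by
  have hγ : 0 ≤ γ := (abs_nonneg g₂).trans hg₂
  have hend : ∀ n, |g₁ * ∑ l ∈ range n, q l - g₂ * ∑ l ∈ range n, qt l|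
      ≤ |g₁ - g₂| + γ * ∑ l ∈ range n, |q l - qt l| := fun n =>
    calc _ ≤ |g₁ - g₂| + γ * |∑ l ∈ range n, q l - ∑ l ∈ range n, qt l| :=
          abs_mul_sub_mul_le (sum_nonneg fun l _ => hq l) (hq₁ n) hg₂
      _ ≤ _ := by
          rw [← sum_sub_distrib]
          gcongr
          exact abs_sum_le_sum_abs _ _
  have hdiff : ∑ l ∈ range k, |q l - qt l| ≤ ∑ l ∈ range (k + 1), |q l - qt l| := by
    rw [sum_range_succ]; linarith [abs_nonneg (q k - qt k)]
  rw [brInt, brInt]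
  refine le_trans ?_ (Real.le_volume_Ico_inter_Ico_toReal _ _ _ _)
  have hstep : g₁ * ∑ l ∈ range (k + 1), q l = g₁ * ∑ l ∈ range k, q l + g₁ * q k := by
    rw [sum_range_succ, mul_add]
  linarith [hend k, hend (k + 1), mul_le_mul_of_nonneg_left hdiff hγ]

theorem le_sum_volume_brInt_inter_brInt_toReal (hq : ∀ k, 0 ≤ q k)
    (hq₁ : ∀ n, ∑ l ∈ range n, q l ≤ 1) (hg₂ : |g₂| ≤ γ) (K : ℕ) :
    g₁ * ∑ k ∈ range K, q k - 2 * K * |g₁ - g₂|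
        - 2 * γ * ∑ k ∈ range K, ((K : ℝ) - k) * |q k - qt k|
      ≤ ∑ k ∈ range K, (volume (brInt g₁ q k ∩ brInt g₂ qt k)).toReal := by
  refine le_of_eq_of_le ?_
    (sum_le_sum fun k _ => le_volume_brInt_inter_brInt_toReal (g₁ := g₁) (qt := qt) hq hq₁ hg₂ k)
  simp only [sum_sub_distrib, ← mul_sum, sum_const, card_range, nsmul_eq_mul,
    sum_range_sum_range_succ]
  ring

end BranchingIntervals

theorem branching_intervals_refinement_lower_bound_general
    (γbar M : ℝ)
    (g₁ : ℝ) (hg₁ : g₁ ∈ Set.Icc (0 : ℝ) γbar)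
    (g₂ : ℝ) (hg₂ : g₂ ∈ Set.Icc (0 : ℝ) γbar)
    (q : ℕ → ℝ) (hq : ∀ k, 0 ≤ q k) (hqsum : HasSum q 1)
    (qt : ℕ → ℝ)
    (hmean : ∃ S, S ≤ M ∧ HasSum (fun k : ℕ => (k : ℝ) * q k) S)
    (K : ℕ) (hK : 1 ≤ K) :
    γbar - γbar * M / K - (2 * K + 1) * |g₁ - g₂|
        - 2 * γbar * ∑ k ∈ Finset.range K, ((K : ℝ) - k) * |q k - qt k|
      ≤ (MeasureTheory.volume
          ((Set.Icc g₁ γbar ∩ Set.Icc g₂ γbar) ∪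
            ⋃ k : ℕ, (brInt g₁ q k ∩ brInt g₂ qt k))).toReal := by
  obtain ⟨S, hSM, hS⟩ := hmean
  have hq₁ : ∀ n, ∑ l ∈ range n, q l ≤ 1 := fun n => sum_le_hasSum _ (fun l _ => hq l) hqsum
  have hpiece : ∀ k, brInt g₁ q k ∩ brInt g₂ qt k ⊆ Set.Ico 0 g₁ := fun k =>
    Set.inter_subset_left.trans (brInt_subset_Ico hg₁.1 hq hq₁ k)
  have hbdd : (Set.Icc g₁ γbar ∩ Set.Icc g₂ γbar) ∪ ⋃ k, (brInt g₁ q k ∩ brInt g₂ qt k)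
      ⊆ Set.Icc 0 γbar :=
    Set.union_subset (fun x hx => ⟨hg₁.1.trans hx.1.1, hx.1.2⟩) <| Set.iUnion_subset fun k x hx =>
      ⟨(hpiece k hx).1, ((hpiece k hx).2.trans_le hg₁.2).le⟩
  have hunion := measure_toReal_add_sum_le_measure_toReal_union_iUnion
    ((measure_mono hbdd).trans_lt (measure_Icc_lt_top (μ := volume))).ne
    (fun k => measurableSet_Ico.inter measurableSet_Ico)
    (fun i j hij => ((pairwise_disjoint_brInt hg₁.1 hq hij).mono Set.inter_subset_left
      Set.inter_subset_left))
    (fun k => Set.disjoint_left.2 fun x hxA hxP => (hpiece k hxP).2.not_ge hxA.1.1) (range K)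
  have hcommon : γbar - g₁ - |g₁ - g₂| ≤ (volume (Set.Icc g₁ γbar ∩ Set.Icc g₂ γbar)).toReal := by
    simpa [Real.volume_Icc_inter_Icc] using Real.le_volume_Ico_inter_Ico_toReal g₁ γbar g₂ γbar
  have hpieces := le_sum_volume_brInt_inter_brInt_toReal (g₁ := g₁) (qt := qt) hq hq₁
    ((abs_of_nonneg hg₂.1).trans_le hg₂.2) K
  have htail : g₁ * (1 - ∑ k ∈ range K, q k) ≤ γbar * M / K :=
    calc g₁ * (1 - ∑ k ∈ range K, q k) ≤ γbar * (S / K) :=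
          mul_le_mul hg₁.2 (sub_sum_range_le_div hq hqsum hS hK) (sub_nonneg.2 (hq₁ K))
            (hg₁.1.trans hg₁.2)
      _ ≤ γbar * M / K := by
          rw [← mul_div_assoc]
          gcongr
          exact hg₁.1.trans hg₁.2
  linarith

/-- Quantitative lower bound on the common refinement of two
branching interval systems: with
`I = ([g₁,γ̄] ∩ [g₂,γ̄]) ∪ ⋃_k (I_k(g₁,q) ∩ I_k(g₂,q̃))`, for every `K ≥ 1`,
`|I| ≥ γ̄ − γ̄M/K − (2K+1)|g₁ − g₂| − 2γ̄ Σ_{k<K} (K−k)|q_k − q̃_k|`. -/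
theorem branching_intervals_refinement_lower_bound
    (γbar M : ℝ) (hγbar : 0 < γbar) (hM : 0 < M)
    (g₁ : ℝ) (hg₁ : g₁ ∈ Set.Icc (0 : ℝ) γbar)
    (g₂ : ℝ) (hg₂ : g₂ ∈ Set.Icc (0 : ℝ) γbar)
    (q : ℕ → ℝ) (hq : ∀ k, 0 ≤ q k) (hqsum : HasSum q 1)
    (qt : ℕ → ℝ) (hqt : ∀ k, 0 ≤ qt k) (hqtsum : HasSum qt 1)
    (hmean : ∃ S, S ≤ M ∧ HasSum (fun k : ℕ => (k : ℝ) * q k) S)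
    (K : ℕ) (hK : 1 ≤ K) :
    γbar - γbar * M / K - (2 * K + 1) * |g₁ - g₂|
        - 2 * γbar * ∑ k ∈ Finset.range K, ((K : ℝ) - k) * |q k - qt k|
      ≤ (MeasureTheory.volume
          ((Set.Icc g₁ γbar ∩ Set.Icc g₂ γbar) ∪
            ⋃ k : ℕ, (brInt g₁ q k ∩ brInt g₂ qt k))).toReal :=
  branching_intervals_refinement_lower_bound_general γbar M g₁ hg₁ g₂ hg₂ q hq hqsum qt hmean K hK
end
end

section
/- Uniform modulus estimate for perturbed branching data (Lemma 3.2 of the paper): with γ, (p_k) as in the context, let γ̃ : ℝ^d × A → [0, γ̄] and, for each k ∈ ℕ, p̃_k : ℝ^d × A → [0,1] with Σ_{k=0}^∞ p̃_k(y,a) = 1 for all (y,a). For (x,a) set I_k(x,a) := I_k(γ(x,a), (p_l(x,a))_l) and Ĩ_k(y,a) := I_k(γ̃(y,a), (p̃_l(y,a))_l), and define I^a(x,y) := ⋃_{k∈ℕ} (I_k(x,a) ∩ Ĩ_k(y,a)) ∪ ([γ(x,a), γ̄] ∩ [γ̃(y,a), γ̄]). Then there exists a modulus of continuity ρ, depending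 only on γ̄, M and the moduli of uniform continuity of γ and of the p_k (in particular independent of γ̃ and the p̃_k), such that for all x, y ∈ ℝ^d and a ∈ A: |I^a(x,y)| / γ̄ ≥ 1 − ρ( |x − y| + ‖γ − γ̃‖_∞ + Σ_{k=0}^∞ 2^{−k}·‖p_k − p̃_k‖_∞ ), where ‖·‖_∞ denotes the supremum norm over ℝ^d × A and |·| the Lebesgue measure. -/
open scoped BigOperators

noncomputable section

/-! Write `L_k = γ(x,a) ∑_{l<k} p_l(x,a)` and `L̃_k` for the perturbed endpoints at `(y,a)`.
Then `I^a(x,y)` contains the disjoint intervals `[max L_k L̃_k, min L_{k+1} L̃_{k+1})` and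
`[max γ γ̃, γ̄]`. Every endpoint moves by at most a modulus of the perturbation size, so the
first `N + 1` intervals have total length at least `L_{N+1}` minus `2(N + 1)` such moduli, and
`L_{N+1} ≥ γ (1 - M / (N + 1))` by Markov's inequality. Optimising over `N` gives the modulus. -/

open Filter MeasureTheory Set Finset Topology

theorem isModulus_max_zero : IsModulus fun t => max t 0 :=
  ⟨fun t => le_max_right t 0, fun _ _ h => max_le_max h le_rfl, by
    simpa using ((continuous_id.max continuous_const).tendsto' 0 0 (by simp)).mono_left
      nhdsWithin_le_nhds⟩

namespace IsModulus

variable {ρ ρ' : ℝ → ℝ}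

theorem add (h : IsModulus ρ) (h' : IsModulus ρ') : IsModulus fun t => ρ t + ρ' t :=
  ⟨fun t => add_nonneg (h.1 t) (h'.1 t), h.2.1.add h'.2.1, by simpa using h.2.2.add h'.2.2⟩

theorem const_mul (h : IsModulus ρ) {c : ℝ} (hc : 0 ≤ c) : IsModulus fun t => c * ρ t :=
  ⟨fun t => mul_nonneg hc (h.1 t), h.2.1.const_mul hc, by simpa using h.2.2.const_mul c⟩

theorem sum {ι : Type*} (s : Finset ι) {ρ : ι → ℝ → ℝ} (h : ∀ i ∈ s, IsModulus (ρ i)) :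
    IsModulus fun t => ∑ i ∈ s, ρ i t :=
  ⟨fun t => sum_nonneg fun i hi => (h i hi).1 t,
    fun _ _ hab => sum_le_sum fun i hi => (h i hi).2.1 hab,
    by simpa using tendsto_finsetSum s fun i hi => (h i hi).2.2⟩

end IsModulus

theorem isModulus_iInf_add {c : ℕ → ℝ} {ω : ℕ → ℝ → ℝ} (hc0 : ∀ N, 0 ≤ c N)
    (hc : Tendsto c atTop (𝓝 0)) (hω : ∀ N, IsModulus (ω N)) :
    IsModulus fun t => ⨅ N, (c N + ω N t) := by
  have hnonneg : ∀ N t, 0 ≤ c N + ω N t := fun N t => add_nonneg (hc0 N) ((hω N).1 t)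
  have hbdd : ∀ t, BddBelow (range fun N => c N + ω N t) :=
    fun t => ⟨0, forall_mem_range.2 fun N => hnonneg N t⟩
  refine ⟨fun t => le_ciInf fun N => hnonneg N t,
    fun a b hab => le_ciInf fun N => (ciInf_le (hbdd a) N).trans
      (add_le_add le_rfl ((hω N).2.1 hab)), ?_⟩
  refine tendsto_order.2 ⟨fun ε hε => Eventually.of_forall fun t =>
    hε.trans_le (le_ciInf fun N => hnonneg N t), fun ε hε => ?_⟩
  obtain ⟨N, hN⟩ := (hc.eventually (gt_mem_nhds hε)).exists
  have hlim : Tendsto (fun t => c N + ω N t) (𝓝[>] 0) (𝓝 (c N)) := by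
    simpa using tendsto_const_nhds.add (hω N).2.2
  filter_upwards [hlim.eventually (gt_mem_nhds hN)] with t ht
  exact (ciInf_le (hbdd t) N).trans_lt ht

theorem one_sub_div_le_sum_range {q : ℕ → ℝ} {S : ℝ} (hq : ∀ k, 0 ≤ q k) (h1 : HasSum q 1)
    (hS : HasSum (fun k : ℕ => (k : ℝ) * q k) S) (n : ℕ) :
    1 - S / (n + 1) ≤ ∑ k ∈ range (n + 1), q k := by
  have hn : (0 : ℝ) < n + 1 := by positivity
  have hhead : HasSum (fun k => if k < n + 1 then ((n : ℝ) + 1) * q k else 0)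
      ((n + 1) * ∑ k ∈ range (n + 1), q k) := by
    have h := hasSum_sum_of_ne_finset_zero (L := .unconditional ℕ) (s := range (n + 1))
      (f := fun k => if k < n + 1 then ((n : ℝ) + 1) * q k else 0)
      (fun k hk => if_neg (by simpa using hk))
    rwa [sum_congr rfl fun k hk => if_pos (mem_range.1 hk), ← mul_sum] at h
  have hpoint : ∀ k, ((n : ℝ) + 1) * q k ≤
      (k : ℝ) * q k + if k < n + 1 then ((n : ℝ) + 1) * q k else 0 := by
    intro k
    split_ifs with hk
    · nlinarith [hq k, (Nat.cast_nonneg k : (0 : ℝ) ≤ k)]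
    · have : (n : ℝ) + 1 ≤ k := by exact_mod_cast not_lt.1 hk
      nlinarith [hq k]
  have hmass := hasSum_le hpoint (h1.mul_left _) (hS.add hhead)
  have : 1 ≤ S / (n + 1) + ∑ k ∈ range (n + 1), q k := by
    rw [div_add' _ _ _ hn.ne', le_div_iff₀ hn]
    linarith
  linarith

theorem sum_min_sub_max_le_volume_real {a b : ℕ → ℝ} {g g' c : ℝ} (ha : Monotone a)
    (hag : ∀ k, a k ≤ g) (hbg : ∀ k, b k ≤ g') (n : ℕ) :
    ∑ k ∈ range n, (min (a (k + 1)) (b (k + 1)) - max (a k) (b k)) + (c - max g g') ≤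
      volume.real ((⋃ k, Ico (a k) (a (k + 1)) ∩ Ico (b k) (b (k + 1))) ∪
        (Icc g c ∩ Icc g' c)) := by
  simp only [Set.Ico_inter_Ico, Set.Icc_inter_Icc, min_self]
  set I : ℕ → Set ℝ := fun k => Ico (max (a k) (b k)) (min (a (k + 1)) (b (k + 1)))
  have hfin : volume ((⋃ k, I k) ∪ Icc (max g g') c) ≠ ⊤ := by
    refine ((measure_mono (t := Icc (a 0) (max g c)) ?_).trans_lt measure_Icc_lt_top).ne
    rintro t (⟨_, ⟨k, rfl⟩, h0, h1⟩ | ⟨h0, h1⟩)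
    · exact ⟨(ha k.zero_le).trans ((le_max_left _ _).trans h0),
        ((h1.trans_le (min_le_left _ _)).trans_le (hag _)).le.trans (le_max_left _ _)⟩
    · exact ⟨(hag 0).trans ((le_max_left _ _).trans h0), h1.trans (le_max_right _ _)⟩
  have hI : ((range n : Finset ℕ) : Set ℕ).PairwiseDisjoint I := fun i _ j _ hij =>
    (ha.pairwise_disjoint_on_Ico_succ hij).mono
      (Ico_subset_Ico (le_max_left _ _) (min_le_left _ _))
      (Ico_subset_Ico (le_max_left _ _) (min_le_left _ _))
  have hIT : Disjoint (⋃ k ∈ range n, I k) (Icc (max g g') c) := by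
    refine disjoint_iUnion₂_left.2 fun k _ => disjoint_left.2 ?_
    rintro t ⟨-, ht⟩ ⟨ht', -⟩
    linarith [hbg (k + 1), min_le_right (a (k + 1)) (b (k + 1)), le_max_right g g']
  calc ∑ k ∈ range n, (min (a (k + 1)) (b (k + 1)) - max (a k) (b k)) + (c - max g g')
      ≤ ∑ k ∈ range n, volume.real (I k) + volume.real (Icc (max g g') c) := by
        gcongr with k
        · rw [Real.volume_real_Ico]
          exact le_max_left _ _
        · rw [Real.volume_real_Icc]
          exact le_max_left _ _
    _ = volume.real ((⋃ k ∈ Finset.range n, I k) ∪ Icc (max g g') c) := by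
        rw [measureReal_union hIT measurableSet_Icc
          (measure_biUnion_lt_top (Finset.finite_toSet _) fun k _ => measure_Ico_lt_top).ne
          measure_Icc_lt_top.ne,
          measureReal_biUnion_finset hI (fun k _ => measurableSet_Ico)
            fun k _ => measure_Ico_lt_top.ne]
    _ ≤ volume.real ((⋃ k, I k) ∪ Icc (max g g') c) :=
        measureReal_mono (union_subset_union_left _ (iUnion₂_subset fun k _ => subset_iUnion I k))
          hfin

theorem one_sub_le_volume_real_brInt_inter_div {c g g' M S δ : ℝ} {q q' : ℕ → ℝ}
    (hc : 0 < c) (hg : g ∈ Set.Icc 0 c) (hg' : 0 ≤ g') (hq : ∀ k, 0 ≤ q k) (hq' : ∀ k, 0 ≤ q' k)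
    (hq1 : HasSum q 1) (hq'1 : HasSum q' 1) (hS : HasSum (fun k : ℕ => (k : ℝ) * q k) S)
    (hSM : S ≤ M) (N : ℕ) (hgδ : |g - g'| ≤ δ)
    (hδ : ∀ k ≤ N + 1, |g * ∑ l ∈ range k, q l - g' * ∑ l ∈ range k, q' l| ≤ δ) :
    1 - (M / (N + 1) + (2 * N + 3) / c * δ) ≤
      volume.real ((⋃ k, brInt g q k ∩ brInt g' q' k) ∪ (Icc g c ∩ Icc g' c)) / c := by
  set a : ℕ → ℝ := fun k => g * ∑ l ∈ range k, q l
  set b : ℕ → ℝ := fun k => g' * ∑ l ∈ range k, q' l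
  have ha : Monotone a := monotone_nat_of_le_succ fun k => by
    simp only [a, sum_range_succ]
    nlinarith [hq k, hg.1]
  have hag : ∀ k, a k ≤ g := fun k =>
    mul_le_of_le_one_right hg.1 (sum_le_hasSum _ (fun l _ => hq l) hq1)
  have hbg : ∀ k, b k ≤ g' := fun k =>
    mul_le_of_le_one_right hg' (sum_le_hasSum _ (fun l _ => hq' l) hq'1)
  have hterm : ∀ k ∈ range (N + 1),
      a (k + 1) - a k - 2 * δ ≤ min (a (k + 1)) (b (k + 1)) - max (a k) (b k) := by
    intro k hk
    have h0 := abs_le.1 (hδ k (by simp at hk; omega))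
    have h1 := abs_le.1 (hδ (k + 1) (by simp at hk; omega))
    have : a (k + 1) - δ ≤ min (a (k + 1)) (b (k + 1)) := le_min (by linarith) (by linarith)
    have : max (a k) (b k) ≤ a k + δ := max_le (by linarith) (by linarith)
    linarith
  have hsum : a (N + 1) - 2 * (N + 1) * δ ≤
      ∑ k ∈ range (N + 1), (min (a (k + 1)) (b (k + 1)) - max (a k) (b k)) := by
    refine le_trans (le_of_eq ?_) (sum_le_sum hterm)
    rw [sum_sub_distrib, sum_range_sub, sum_const, card_range, nsmul_eq_mul]
    simp only [a, range_zero, sum_empty, mul_zero]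
    push_cast
    ring
  have htail : max g g' ≤ g + δ :=
    max_le (by linarith [abs_nonneg (g - g')]) (by linarith [(abs_le.1 hgδ).1])
  have hhead : g - c * (M / (N + 1)) ≤ a (N + 1) := by
    have hMarkov := one_sub_div_le_sum_range hq hq1 hS N
    have hS0 : 0 ≤ S := hS.nonneg fun k => mul_nonneg k.cast_nonneg (hq k)
    have : g * (S / (N + 1)) ≤ c * (M / (N + 1)) :=
      mul_le_mul hg.2 (by gcongr) (by positivity) hc.le
    nlinarith [mul_le_mul_of_nonneg_left hMarkov hg.1]
  rw [le_div_iff₀ hc]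
  calc (1 - (M / (N + 1) + (2 * N + 3) / c * δ)) * c
      = c - c * (M / (N + 1)) - (2 * N + 3) * δ := by field_simp; ring
    _ ≤ ∑ k ∈ range (N + 1), (min (a (k + 1)) (b (k + 1)) - max (a k) (b k)) +
          (c - max g g') := by linarith
    _ ≤ _ := sum_min_sub_max_le_volume_real ha hag hbg (N + 1)

theorem iSup_abs_sub_mem_Icc {ι : Type*} {f f' : ι → ℝ} {c : ℝ} (hf : ∀ i, f i ∈ Set.Icc 0 c)
    (hf' : ∀ i, f' i ∈ Set.Icc 0 c) (hc : 0 ≤ c) : ⨆ i, |f i - f' i| ∈ Set.Icc 0 c :=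
  ⟨Real.iSup_nonneg fun _ => abs_nonneg _, Real.iSup_le (fun i =>
    abs_sub_le_of_nonneg_of_le (hf i).1 (hf i).2 (hf' i).1 (hf' i).2) hc⟩

theorem abs_sub_le_of_modulus_of_iSup_le {X A : Type*} [SeminormedAddCommGroup X]
    {f f' : X → A → ℝ} {ρ : ℝ → ℝ} {c : ℝ} (hρ : Monotone ρ)
    (hf : ∀ x y a, |f x a - f y a| ≤ ρ ‖x - y‖) (hfc : ∀ x a, f x a ∈ Set.Icc 0 c)
    (hf'c : ∀ x a, f' x a ∈ Set.Icc 0 c) {x y : X} {a : A} {t t' : ℝ} (ht : ‖x - y‖ ≤ t)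
    (ht' : ⨆ z : X × A, |f z.1 z.2 - f' z.1 z.2| ≤ t') : |f x a - f' y a| ≤ ρ t + t' := by
  have hbdd : BddAbove (range fun z : X × A => |f z.1 z.2 - f' z.1 z.2|) :=
    ⟨c, forall_mem_range.2 fun z => abs_sub_le_of_nonneg_of_le (hfc z.1 z.2).1 (hfc z.1 z.2).2
      (hf'c z.1 z.2).1 (hf'c z.1 z.2).2⟩
  calc |f x a - f' y a| ≤ |f x a - f y a| + |f y a - f' y a| := abs_sub_le _ _ _
    _ ≤ ρ t + t' := add_le_add ((hf x y a).trans (hρ ht)) ((le_ciSup hbdd (y, a)).trans ht')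

theorem le_two_pow_mul_tsum_half_pow_mul {q : ℕ → ℝ} (hq0 : ∀ k, 0 ≤ q k) (hq1 : ∀ k, q k ≤ 1)
    (k : ℕ) : q k ≤ 2 ^ k * ∑' l, (1 / 2 : ℝ) ^ l * q l := by
  have hsum : Summable fun l => (1 / 2 : ℝ) ^ l * q l :=
    summable_geometric_two.of_nonneg_of_le (fun l => mul_nonneg (by positivity) (hq0 l))
      fun l => mul_le_of_le_one_right (by positivity) (hq1 l)
  calc q k = 2 ^ k * ((1 / 2 : ℝ) ^ k * q k) := by
        rw [← mul_assoc, ← mul_pow]; norm_num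
    _ ≤ 2 ^ k * ∑' l, (1 / 2 : ℝ) ^ l * q l := by
        gcongr
        exact hsum.le_tsum k fun l _ => mul_nonneg (by positivity) (hq0 l)

theorem abs_mul_sub_mul_le_s15 {g g' u v c : ℝ} (hu : u ∈ Set.Icc 0 1) (hg' : |g'| ≤ c) :
    |g * u - g' * v| ≤ |g - g'| + c * |u - v| :=
  calc |g * u - g' * v| = |(g - g') * u + g' * (u - v)| := by ring_nf
    _ ≤ |g - g'| * |u| + |g'| * |u - v| := by
        rw [← abs_mul, ← abs_mul]
        exact abs_add_le _ _
    _ ≤ |g - g'| * 1 + c * |u - v| := by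
        gcongr
        exact abs_le.2 ⟨by linarith [hu.1], hu.2⟩
    _ = |g - g'| + c * |u - v| := by ring

/-- Bounds how far the endpoint `γ · ∑_{l < n} p_l` moves under a perturbation of size `t`; the
factor `2 ^ l` undoes the weight `2⁻ˡ` of `p_l` in the perturbation size. -/
def endpointModulus (c : ℝ) (ργ : ℝ → ℝ) (ρp : ℕ → ℝ → ℝ) (n : ℕ) (t : ℝ) : ℝ :=
  ργ t + max t 0 + c * ∑ l ∈ range n, (ρp l t + 2 ^ l * max t 0)

/-- Keeping only the first `N + 1` intervals loses mass `M / (N + 1)` by Markov's inequality,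
and each of the `2N + 3` endpoints involved moves by at most `endpointModulus`. -/
def branchingModulus (c M : ℝ) (ργ : ℝ → ℝ) (ρp : ℕ → ℝ → ℝ) (t : ℝ) : ℝ :=
  ⨅ N : ℕ, (M / (N + 1) + (2 * N + 3) / c * endpointModulus c ργ ρp (N + 1) t)

section

variable {c : ℝ} {ργ : ℝ → ℝ} {ρp : ℕ → ℝ → ℝ}

theorem isModulus_endpointModulus (hc : 0 ≤ c) (hργ : IsModulus ργ)
    (hρp : ∀ l, IsModulus (ρp l)) (n : ℕ) : IsModulus (endpointModulus c ργ ρp n) :=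
  (hργ.add isModulus_max_zero).add <| (IsModulus.sum _ fun l _ =>
    (hρp l).add (isModulus_max_zero.const_mul (by positivity))).const_mul hc

theorem monotone_endpointModulus (hc : 0 ≤ c) (hρp : ∀ l t, 0 ≤ ρp l t) (t : ℝ) :
    Monotone fun n => endpointModulus c ργ ρp n t := fun m n hmn =>
  add_le_add le_rfl <| mul_le_mul_of_nonneg_left (sum_le_sum_of_subset_of_nonneg
    (f := fun l => ρp l t + 2 ^ l * max t 0) (range_subset_range.2 hmn)
    fun l _ _ => add_nonneg (hρp l t) (by positivity)) hc

theorem abs_mul_sum_sub_mul_sum_le_endpointModulus {g g' t : ℝ} {q q' : ℕ → ℝ}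
    (hg' : g' ∈ Set.Icc 0 c) (hq : ∀ k, 0 ≤ q k) (hq1 : HasSum q 1) (ht : 0 ≤ t)
    (hgt : |g - g'| ≤ ργ t + t) (hqt : ∀ l, |q l - q' l| ≤ ρp l t + 2 ^ l * t) (n : ℕ) :
    |g * ∑ l ∈ range n, q l - g' * ∑ l ∈ range n, q' l| ≤ endpointModulus c ργ ρp n t :=
  calc |g * ∑ l ∈ range n, q l - g' * ∑ l ∈ range n, q' l|
      ≤ |g - g'| + c * |∑ l ∈ range n, q l - ∑ l ∈ range n, q' l| :=
        abs_mul_sub_mul_le_s15 ⟨sum_nonneg fun l _ => hq l, sum_le_hasSum _ (fun l _ => hq l) hq1⟩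
          (abs_le.2 ⟨by linarith [hg'.1, hg'.2], hg'.2⟩)
    _ ≤ ργ t + t + c * ∑ l ∈ range n, (ρp l t + 2 ^ l * t) := by
        rw [← sum_sub_distrib]
        gcongr
        · linarith [hg'.1, hg'.2, abs_nonneg (g - g')]
        · exact (abs_sum_le_sum_abs _ _).trans (sum_le_sum fun l _ => hqt l)
    _ = endpointModulus c ργ ρp n t := by simp only [endpointModulus, max_eq_left ht]

theorem one_sub_branchingModulus_le_volume_real_div {M S t g g' : ℝ} {q q' : ℕ → ℝ}
    (hc : 0 < c) (hρp : ∀ l t, 0 ≤ ρp l t) (hg : g ∈ Set.Icc 0 c) (hg' : g' ∈ Set.Icc 0 c)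
    (hq : ∀ k, 0 ≤ q k) (hq' : ∀ k, 0 ≤ q' k) (hq1 : HasSum q 1) (hq'1 : HasSum q' 1)
    (hS : HasSum (fun k : ℕ => (k : ℝ) * q k) S) (hSM : S ≤ M) (ht : 0 ≤ t)
    (hgt : |g - g'| ≤ ργ t + t) (hqt : ∀ l, |q l - q' l| ≤ ρp l t + 2 ^ l * t) :
    1 - branchingModulus c M ργ ρp t ≤
      volume.real ((⋃ k, brInt g q k ∩ brInt g' q' k) ∪ (Icc g c ∩ Icc g' c)) / c := by
  have hmono := monotone_endpointModulus hc.le hρp (ργ := ργ) t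
  have hend := abs_mul_sum_sub_mul_sum_le_endpointModulus hg' hq hq1 ht hgt hqt
  rw [sub_le_comm]
  refine le_ciInf fun N => ?_
  have hgδ : |g - g'| ≤ endpointModulus c ργ ρp (N + 1) t :=
    hgt.trans (by simpa [endpointModulus, max_eq_left ht] using hmono (Nat.zero_le (N + 1)))
  have := one_sub_le_volume_real_brInt_inter_div hc hg hg'.1 hq hq' hq1 hq'1 hS hSM N hgδ
    fun k hk => (hend k).trans (hmono hk)
  linarith

theorem isModulus_branchingModulus {M : ℝ} (hc : 0 < c) (hM : 0 ≤ M) (hργ : IsModulus ργ)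
    (hρp : ∀ l, IsModulus (ρp l)) : IsModulus (branchingModulus c M ργ ρp) :=
  isModulus_iInf_add (fun N => by positivity)
    (by simpa [div_eq_mul_inv] using tendsto_one_div_add_atTop_nhds_zero_nat.const_mul M)
    fun N => (isModulus_endpointModulus hc.le hργ hρp (N + 1)).const_mul (by positivity)

end

theorem perturbed_branching_intervals_modulus_estimate_general
    (d : ℕ) (A : Type)
    (γbar M : ℝ) (hγbar : 0 < γbar) (hM : 0 < M)
    (γ : (Fin d → ℝ) → A → ℝ)
    (p : ℕ → (Fin d → ℝ) → A → ℝ)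
    (hγ : ∀ x a, γ x a ∈ Set.Icc (0 : ℝ) γbar)
    (hp01 : ∀ k x a, p k x a ∈ Set.Icc (0 : ℝ) 1)
    (hpsum : ∀ x a, HasSum (fun k => p k x a) 1)
    (hpmean : ∀ x a, ∃ S, S ≤ M ∧ HasSum (fun k : ℕ => (k : ℝ) * p k x a) S)
    (hγUC : ∃ ρ, IsModulus ρ ∧ ∀ x y a, |γ x a - γ y a| ≤ ρ ‖x - y‖)
    (hpUC : ∀ k, ∃ ρ, IsModulus ρ ∧ ∀ x y a, |p k x a - p k y a| ≤ ρ ‖x - y‖) :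
    ∃ ρ : ℝ → ℝ, IsModulus ρ ∧
      ∀ (γt : (Fin d → ℝ) → A → ℝ) (pt : ℕ → (Fin d → ℝ) → A → ℝ),
        (∀ y a, γt y a ∈ Set.Icc (0 : ℝ) γbar) →
        (∀ k y a, pt k y a ∈ Set.Icc (0 : ℝ) 1) →
        (∀ y a, HasSum (fun k => pt k y a) 1) →
        ∀ (x y : Fin d → ℝ) (a : A),
          1 - ρ (‖x - y‖
                + (⨆ z : (Fin d → ℝ) × A, |γ z.1 z.2 - γt z.1 z.2|)
                + ∑' k : ℕ, (1 / 2 : ℝ) ^ k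
                    * ⨆ z : (Fin d → ℝ) × A, |p k z.1 z.2 - pt k z.1 z.2|)
            ≤ (MeasureTheory.volume
                ((⋃ k : ℕ,
                    (brInt (γ x a) (fun l => p l x a) k
                      ∩ brInt (γt y a) (fun l => pt l y a) k)) ∪
                  (Set.Icc (γ x a) γbar ∩ Set.Icc (γt y a) γbar))).toReal
              / γbar := by
  obtain ⟨ργ, hργ, hγest⟩ := hγUC
  choose ρp hρp hpest using hpUC
  refine ⟨branchingModulus γbar M ργ ρp, isModulus_branchingModulus hγbar hM.le hργ hρp, ?_⟩
  intro γt pt hγt hpt hptsum x y a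
  have hSγ := iSup_abs_sub_mem_Icc (fun z : (Fin d → ℝ) × A => hγ z.1 z.2)
    (fun z => hγt z.1 z.2) hγbar.le
  have hSp := fun k => iSup_abs_sub_mem_Icc (fun z : (Fin d → ℝ) × A => hp01 k z.1 z.2)
    (fun z => hpt k z.1 z.2) zero_le_one
  have hSp_le := le_two_pow_mul_tsum_half_pow_mul (fun k => (hSp k).1) fun k => (hSp k).2
  have hSp_nonneg : 0 ≤ ∑' k : ℕ, (1 / 2 : ℝ) ^ k *
      ⨆ z : (Fin d → ℝ) × A, |p k z.1 z.2 - pt k z.1 z.2| :=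
    tsum_nonneg fun k => mul_nonneg (by positivity) (hSp k).1
  have hxy := norm_nonneg (x - y)
  obtain ⟨S, hSM, hS⟩ := hpmean x a
  exact one_sub_branchingModulus_le_volume_real_div hγbar (fun l => (hρp l).1) (hγ x a)
    (hγt y a) (fun k => (hp01 k x a).1) (fun k => (hpt k y a).1) (hpsum x a) (hptsum y a) hS hSM
    (by linarith [hSγ.1])
    (abs_sub_le_of_modulus_of_iSup_le hργ.2.1 hγest hγ hγt (by linarith [hSγ.1]) (by linarith))
    fun k => abs_sub_le_of_modulus_of_iSup_le (hρp k).2.1 (hpest k) (hp01 k) (hpt k)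
      (by linarith [hSγ.1]) ((hSp_le k).trans (by gcongr; linarith [hSγ.1]))

/-- **Lemma 3.2 of the paper.** Uniform modulus estimate for
perturbed branching data: there is a modulus of continuity `ρ`, independent of
the perturbed data `(γ̃, p̃)`, such that
`|I^a(x,y)|/γ̄ ≥ 1 − ρ(|x−y| + ‖γ−γ̃‖_∞ + Σ_k 2^{−k} ‖p_k−p̃_k‖_∞)`. -/
theorem perturbed_branching_intervals_modulus_estimate
    (d : ℕ) (hd : 0 < d) (A : Type) [Nonempty A]
    (γbar M : ℝ) (hγbar : 0 < γbar) (hM : 0 < M)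
    (γ : (Fin d → ℝ) → A → ℝ)
    (p : ℕ → (Fin d → ℝ) → A → ℝ)
    (hγ : ∀ x a, γ x a ∈ Set.Icc (0 : ℝ) γbar)
    (hp01 : ∀ k x a, p k x a ∈ Set.Icc (0 : ℝ) 1)
    (hpsum : ∀ x a, HasSum (fun k => p k x a) 1)
    (hpmean : ∀ x a, ∃ S, S ≤ M ∧ HasSum (fun k : ℕ => (k : ℝ) * p k x a) S)
    (hγUC : ∃ ρ, IsModulus ρ ∧ ∀ x y a, |γ x a - γ y a| ≤ ρ ‖x - y‖)
    (hpUC : ∀ k, ∃ ρ, IsModulus ρ ∧ ∀ x y a, |p k x a - p k y a| ≤ ρ ‖x - y‖) :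
    ∃ ρ : ℝ → ℝ, IsModulus ρ ∧
      ∀ (γt : (Fin d → ℝ) → A → ℝ) (pt : ℕ → (Fin d → ℝ) → A → ℝ),
        (∀ y a, γt y a ∈ Set.Icc (0 : ℝ) γbar) →
        (∀ k y a, pt k y a ∈ Set.Icc (0 : ℝ) 1) →
        (∀ y a, HasSum (fun k => pt k y a) 1) →
        ∀ (x y : Fin d → ℝ) (a : A),
          1 - ρ (‖x - y‖
                + (⨆ z : (Fin d → ℝ) × A, |γ z.1 z.2 - γt z.1 z.2|)
                + ∑' k : ℕ, (1 / 2 : ℝ) ^ k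
                    * ⨆ z : (Fin d → ℝ) × A, |p k z.1 z.2 - pt k z.1 z.2|)
            ≤ (MeasureTheory.volume
                ((⋃ k : ℕ,
                    (brInt (γ x a) (fun l => p l x a) k
                      ∩ brInt (γt y a) (fun l => pt l y a) k)) ∪
                  (Set.Icc (γ x a) γbar ∩ Set.Icc (γt y a) γbar))).toReal
              / γbar :=
  perturbed_branching_intervals_modulus_estimate_general d A γbar M hγbar hM γ p hγ hp01 hpsum
    hpmean hγUC hpUC
end
end
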